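/- arXiv:2511.06132 — 3 statements merged into one kernel-verified Lean document; each statement's English description precedes it below -/
import Mathlib

section
/- Let f₁,…,f_N : ℝ^d → ℝ each be L-smooth and μ-strongly convex, and let p₁,…,p_N ∈ [0,1]. For each i, let F_i(w) := E_{m_i ~ Ber(p_i)^d}[f_i(m_i ⊙ w)] be the expectation over a random mask whose coordinates are independent Bernoulli(p_i). Then F_p(w) := (1/N) Σ_i F_i(w) is μ_p-strongly convex and L_p-smooth, where μ_p = (1/N) Σ_i p_i μ and L_p = (1/N) Σ_i p_i L. -/
open RealInnerProductSpace
noncomputable def boolMask {d : ℕ} (b : Fin d → Bool) (w : EuclideanSpace ℝ (Fin d)) :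
    EuclideanSpace ℝ (Fin d) := WithLp.toLp 2 (fun j => if b j then w j else 0)

lemma mask_sub {d : ℕ} (b : Fin d → Bool) (x y : EuclideanSpace ℝ (Fin d)) :
    boolMask b y - boolMask b x = boolMask b (y - x) := by
  ext j; simp [boolMask]; split <;> simp

lemma mask_neg {d : ℕ} (b : Fin d → Bool) (x : EuclideanSpace ℝ (Fin d)) :
    boolMask b (-x) = -boolMask b x := by
  ext j; simp [boolMask]; split <;> simp

lemma inner_mask {d : ℕ} (b : Fin d → Bool) (v w : EuclideanSpace ℝ (Fin d)) :
    ⟪v, boolMask b w⟫ = ⟪boolMask b v, w⟫ := by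
  simp only [PiLp.inner_apply, RCLike.inner_apply, boolMask, PiLp.toLp_apply, starRingEnd_apply, star_trivial]
  refine Finset.sum_congr rfl fun j _ => ?_
  split <;> simp

lemma sum_prod_bool {d : ℕ} (g : Fin d → Bool → ℝ) :
    ∑ b : Fin d → Bool, ∏ j, g j (b j) = ∏ j, (g j false + g j true) := by
  have h := Finset.prod_univ_sum (fun _ : Fin d => (Finset.univ : Finset Bool)) g
  have h2 : (Fintype.piFinset fun _ : Fin d => (Finset.univ : Finset Bool)) = Finset.univ :=
    Fintype.piFinset_univ
  rw [h2] at h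
  rw [← h]
  exact Finset.prod_congr rfl fun j _ => by rw [Fintype.sum_bool]; ring

lemma mask_norm_sq {d : ℕ} (b : Fin d → Bool) (w : EuclideanSpace ℝ (Fin d)) :
    ‖boolMask b w‖ ^ 2 = ∑ j, if b j then (w j) ^ 2 else 0 := by
  rw [← real_inner_self_eq_norm_sq]
  simp only [PiLp.inner_apply, RCLike.inner_apply, starRingEnd_apply, star_trivial, boolMask, PiLp.toLp_apply]
  exact Finset.sum_congr rfl fun j _ => by split <;> ring

lemma exp_mask_norm_sq {d : ℕ} (q : ℝ) (w : EuclideanSpace ℝ (Fin d)) :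
    ∑ b : Fin d → Bool, (∏ j, if b j then q else 1 - q) * ‖boolMask b w‖ ^ 2
      = q * ‖w‖ ^ 2 := by
  have hw : ‖w‖ ^ 2 = ∑ j, (w j) ^ 2 := by
    rw [← real_inner_self_eq_norm_sq]
    simp only [PiLp.inner_apply, RCLike.inner_apply, starRingEnd_apply, star_trivial]
    exact Finset.sum_congr rfl fun j _ => by ring
  simp only [mask_norm_sq, Finset.mul_sum]
  rw [Finset.sum_comm, hw, Finset.mul_sum]
  refine Finset.sum_congr rfl fun j _ => ?_
  set h : Fin d → Bool → ℝ := fun k c =>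
    if k = j then (if c then q * (w j)^2 else 0) else (if c then q else 1 - q) with hh
  have key : ∀ b : Fin d → Bool,
      (∏ k, if b k then q else 1 - q) * (if b j then (w j)^2 else 0) = ∏ k, h k (b k) := by
    intro b
    rw [← Finset.mul_prod_erase Finset.univ (fun k => h k (b k)) (Finset.mem_univ j),
        ← Finset.mul_prod_erase Finset.univ (fun k => if b k then q else 1 - q)
          (Finset.mem_univ j)]
    have hE : ∏ k ∈ Finset.univ.erase j, h k (b k)
        = ∏ k ∈ Finset.univ.erase j, (if b k then q else 1 - q) :=
      Finset.prod_congr rfl fun k hk => by simp [hh, Finset.ne_of_mem_erase hk]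
    rw [hE]
    simp only [hh, if_pos rfl]
    cases hbj : b j <;> simp <;> ring
  rw [Finset.sum_congr rfl fun b _ => key b, sum_prod_bool]
  have : ∀ k : Fin d, h k false + h k true = if k = j then q * (w j)^2 else 1 := by
    intro k; by_cases hk : k = j <;> simp [hh, hk] <;> ring
  rw [Finset.prod_congr rfl fun k _ => this k]
  simp [Finset.prod_ite_eq' Finset.univ j]

lemma master {d N : ℕ} (c : ℝ)
    (f : Fin N → EuclideanSpace ℝ (Fin d) → ℝ)
    (f' : Fin N → EuclideanSpace ℝ (Fin d) → EuclideanSpace ℝ (Fin d))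
    (p : Fin N → ℝ) (hp : ∀ i, p i ∈ Set.Icc (0 : ℝ) 1)
    (hc : ∀ i x y, f i x + ⟪f' i x, y - x⟫ + c / 2 * ‖y - x‖ ^ 2 ≤ f i y)
    (x y : EuclideanSpace ℝ (Fin d)) :
    (1 / N : ℝ) * (∑ i, ∑ b : Fin d → Bool,
        (∏ j, if b j then p i else 1 - p i) * f i (boolMask b x))
      + ⟪(1 / N : ℝ) • ∑ i, ∑ b : Fin d → Bool,
          (∏ j, if b j then p i else 1 - p i) • boolMask b (f' i (boolMask b x)), y - x⟫
      + ((1 / N : ℝ) * ∑ i, p i * c) / 2 * ‖y - x‖ ^ 2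
      ≤ (1 / N : ℝ) * (∑ i, ∑ b : Fin d → Bool,
        (∏ j, if b j then p i else 1 - p i) * f i (boolMask b y)) := by
  have hπ : ∀ (i : Fin N) (b : Fin d → Bool),
      (0:ℝ) ≤ ∏ j, if b j then p i else 1 - p i := fun i b =>
    Finset.prod_nonneg fun k _ => by
      rcases hp i with ⟨h0, h1⟩; split <;> linarith
  have claim : ∀ i : Fin N,
      (∑ b : Fin d → Bool, (∏ j, if b j then p i else 1 - p i) * f i (boolMask b x))
        + (∑ b : Fin d → Bool, (∏ j, if b j then p i else 1 - p i)
            * ⟪boolMask b (f' i (boolMask b x)), y - x⟫)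
        + p i * c / 2 * ‖y - x‖ ^ 2
      ≤ ∑ b : Fin d → Bool, (∏ j, if b j then p i else 1 - p i) * f i (boolMask b y) := by
    intro i
    have hq : p i * c / 2 * ‖y - x‖ ^ 2
        = ∑ b : Fin d → Bool, (∏ j, if b j then p i else 1 - p i)
            * (c / 2 * ‖boolMask b (y - x)‖ ^ 2) := by
      have h1 : ∑ b : Fin d → Bool, (∏ j, if b j then p i else 1 - p i)
            * (c / 2 * ‖boolMask b (y - x)‖ ^ 2)
          = c / 2 * ∑ b : Fin d → Bool, (∏ j, if b j then p i else 1 - p i)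
            * ‖boolMask b (y - x)‖ ^ 2 := by
        rw [Finset.mul_sum]; exact Finset.sum_congr rfl fun b _ => by ring
      rw [h1, exp_mask_norm_sq]; ring
    rw [hq, ← Finset.sum_add_distrib, ← Finset.sum_add_distrib]
    refine Finset.sum_le_sum fun b _ => ?_
    have h1 := hc i (boolMask b x) (boolMask b y)
    rw [mask_sub, inner_mask] at h1
    have h2 := mul_le_mul_of_nonneg_left h1 (hπ i b)
    rw [mul_add, mul_add] at h2
    linarith
  have hsum := Finset.sum_le_sum fun i (_ : i ∈ Finset.univ) => claim i
  rw [Finset.sum_add_distrib, Finset.sum_add_distrib] at hsum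
  have hq2 : ∑ i, p i * c / 2 * ‖y - x‖ ^ 2 = (∑ i, p i * c) / 2 * ‖y - x‖ ^ 2 := by
    rw [Finset.sum_div, Finset.sum_mul]
  rw [hq2] at hsum
  have hNn : (0:ℝ) ≤ (1 / N : ℝ) := by positivity
  have := mul_le_mul_of_nonneg_left hsum hNn
  rw [real_inner_smul_left, sum_inner]
  simp only [sum_inner, real_inner_smul_left] at *
  nlinarith [this]

/-- The masked objective `F_p(w) = (1/N) Σ_i E_{m ~ Ber(p_i)^d}[f_i(m ⊙ w)]` is
`μ_p`-strongly convex and `L_p`-smooth, where `μ_p = (1/N) Σ_i p_i μ` and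
`L_p = (1/N) Σ_i p_i L`, stated via first-order inequalities with gradient
`∇F_p(w) = (1/N) Σ_i E[m ⊙ ∇f_i(m ⊙ w)]`. -/
theorem masked_objective_strongly_convex_smooth {d N : ℕ} (hN : 0 < N) (L μ : ℝ)
    (f : Fin N → EuclideanSpace ℝ (Fin d) → ℝ)
    (f' : Fin N → EuclideanSpace ℝ (Fin d) → EuclideanSpace ℝ (Fin d))
    (p : Fin N → ℝ) (hp : ∀ i, p i ∈ Set.Icc (0 : ℝ) 1)
    (hsmooth : ∀ i x y, f i y ≤ f i x + ⟪f' i x, y - x⟫ + L / 2 * ‖y - x‖ ^ 2)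
    (hsc : ∀ i x y, f i y ≥ f i x + ⟪f' i x, y - x⟫ + μ / 2 * ‖y - x‖ ^ 2)
    (Fp : EuclideanSpace ℝ (Fin d) → ℝ)
    (hFp : ∀ w, Fp w = (1 / N : ℝ) * ∑ i, ∑ b : Fin d → Bool,
      (∏ j, if b j then p i else 1 - p i) * f i (boolMask b w))
    (Fp' : EuclideanSpace ℝ (Fin d) → EuclideanSpace ℝ (Fin d))
    (hFp' : ∀ w, Fp' w = (1 / N : ℝ) • ∑ i, ∑ b : Fin d → Bool,
      (∏ j, if b j then p i else 1 - p i) • boolMask b (f' i (boolMask b w)))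
    (μp Lp : ℝ)
    (hμp : μp = (1 / N : ℝ) * ∑ i, p i * μ)
    (hLp : Lp = (1 / N : ℝ) * ∑ i, p i * L) :
    (∀ x y, Fp y ≥ Fp x + ⟪Fp' x, y - x⟫ + μp / 2 * ‖y - x‖ ^ 2) ∧
    (∀ x y, Fp y ≤ Fp x + ⟪Fp' x, y - x⟫ + Lp / 2 * ‖y - x‖ ^ 2) := by
  constructor
  · intro x y
    have h := master μ f f' p hp (fun i a b => by have := hsc i a b; linarith) x y
    rw [hFp x, hFp y, hFp' x, hμp]
    linarith
  · intro x y
    have h := master (-L) (fun i w => -(f i w)) (fun i w => -(f' i w)) p hp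
      (fun i a b => by have := hsmooth i a b; simp only [inner_neg_left]; linarith) x y
    simp only [mask_neg, smul_neg, mul_neg, Finset.sum_neg_distrib, inner_neg_left,
      neg_neg] at h
    rw [hFp x, hFp y, hFp' x, hLp]
    linarith
end

section
/- Let W ⊆ ℝ^d be a closed convex set and let Φ, Ψ : ℝ^d → ℝ be differentiable, with Φ μ-strongly convex. Let w_Φ = argmin_{w ∈ W} Φ(w) and w_Ψ = argmin_{w ∈ W} Ψ(w). If ‖∇Φ(w) − ∇Ψ(w)‖ ≤ ε for all w ∈ W, then ‖w_Φ − w_Ψ‖ ≤ ε/μ. -/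
/-!
Test the strong monotonicity of `∇Φ` on the pair `(w_Φ, w_Ψ)`. Adding the two first-order
optimality conditions, each tested at the other minimizer, replaces `∇Φ(w_Φ)` by `∇Ψ(w_Ψ)` at the
cost of a nonpositive term, so `μ‖w_Φ − w_Ψ‖² ≤ ⟪∇Ψ(w_Ψ) − ∇Φ(w_Ψ), w_Φ − w_Ψ⟫ ≤ ε‖w_Φ − w_Ψ‖`.
-/

open RealInnerProductSpace

section

variable {E : Type*} [NormedAddCommGroup E] [InnerProductSpace ℝ E]

theorem inner_sub_sub_nonpos_of_variationalIneq {W : Set E} {F G : E → E} {x y : E}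
    (hx : x ∈ W) (hy : y ∈ W) (hFx : ∀ w ∈ W, ⟪w - x, F x⟫ ≥ 0)
    (hGy : ∀ w ∈ W, ⟪w - y, G y⟫ ≥ 0) :
    ⟪F x - G y, x - y⟫ ≤ 0 := by
  have hF := hFx y hy
  have hG := hGy x hx
  rw [← neg_sub, inner_neg_left, real_inner_comm] at hF
  rw [real_inner_comm] at hG
  rw [inner_sub_left]
  linarith

theorem norm_le_div_of_mul_sq_le_inner {μ ε : ℝ} (hμ : 0 < μ) (hε : 0 ≤ ε) {u v : E}
    (h : μ * ‖u‖ ^ 2 ≤ ⟪v, u⟫) (hv : ‖v‖ ≤ ε) : ‖u‖ ≤ ε / μ := by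
  have hbound : μ * ‖u‖ ^ 2 ≤ ε * ‖u‖ :=
    calc μ * ‖u‖ ^ 2 ≤ ⟪v, u⟫ := h
      _ ≤ ‖v‖ * ‖u‖ := real_inner_le_norm v u
      _ ≤ ε * ‖u‖ := by gcongr
  rcases (norm_nonneg u).eq_or_lt with hu | hu
  · rw [← hu]
    positivity
  · rw [le_div_iff₀ hμ]
    nlinarith

end

theorem minimizer_lipschitz_in_objective_general {d : ℕ} (μ ε : ℝ) (hμ : 0 < μ)
    (W : Set (EuclideanSpace ℝ (Fin d)))
    (Φ' Ψ' : EuclideanSpace ℝ (Fin d) → EuclideanSpace ℝ (Fin d))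
    (hmono : ∀ x y, ⟪Φ' x - Φ' y, x - y⟫ ≥ μ * ‖x - y‖ ^ 2)
    (wΦ wΨ : EuclideanSpace ℝ (Fin d)) (hwΦ : wΦ ∈ W) (hwΨ : wΨ ∈ W)
    (hoptΦ : ∀ w ∈ W, ⟪w - wΦ, Φ' wΦ⟫ ≥ 0)
    (hoptΨ : ∀ w ∈ W, ⟪w - wΨ, Ψ' wΨ⟫ ≥ 0)
    (hclose : ∀ w ∈ W, ‖Φ' w - Ψ' w‖ ≤ ε) :
    ‖wΦ - wΨ‖ ≤ ε / μ := by
  have hε : 0 ≤ ε := (norm_nonneg _).trans (hclose wΨ hwΨ)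
  have hopt := inner_sub_sub_nonpos_of_variationalIneq hwΦ hwΨ hoptΦ hoptΨ
  refine norm_le_div_of_mul_sq_le_inner hμ hε (v := Ψ' wΨ - Φ' wΨ) ?_
    ((norm_sub_rev _ _).trans_le (hclose wΨ hwΨ))
  calc μ * ‖wΦ - wΨ‖ ^ 2 ≤ ⟪Φ' wΦ - Φ' wΨ, wΦ - wΨ⟫ := hmono wΦ wΨ
    _ = ⟪Φ' wΦ - Ψ' wΨ, wΦ - wΨ⟫ + ⟪Ψ' wΨ - Φ' wΨ, wΦ - wΨ⟫ := by
      rw [← inner_add_left, sub_add_sub_cancel]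
    _ ≤ ⟪Ψ' wΨ - Φ' wΨ, wΦ - wΨ⟫ := by linarith

/-- If `Φ` is `μ`-strongly convex, `wΦ` and `wΨ` are the constrained minimizers of `Φ` and `Ψ`
on a closed convex set `W` (expressed by first-order optimality conditions), and the gradients
of `Φ` and `Ψ` differ by at most `ε` on `W`, then `‖wΦ − wΨ‖ ≤ ε/μ`. -/
theorem minimizer_lipschitz_in_objective {d : ℕ} (μ ε : ℝ) (hμ : 0 < μ) (hε : 0 ≤ ε)
    (W : Set (EuclideanSpace ℝ (Fin d))) (hW : Convex ℝ W) (hWc : IsClosed W)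
    (Φ' Ψ' : EuclideanSpace ℝ (Fin d) → EuclideanSpace ℝ (Fin d))
    (hmono : ∀ x y, ⟪Φ' x - Φ' y, x - y⟫ ≥ μ * ‖x - y‖ ^ 2)
    (wΦ wΨ : EuclideanSpace ℝ (Fin d)) (hwΦ : wΦ ∈ W) (hwΨ : wΨ ∈ W)
    (hoptΦ : ∀ w ∈ W, ⟪w - wΦ, Φ' wΦ⟫ ≥ 0)
    (hoptΨ : ∀ w ∈ W, ⟪w - wΨ, Ψ' wΨ⟫ ≥ 0)
    (hclose : ∀ w ∈ W, ‖Φ' w - Ψ' w‖ ≤ ε) :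
    ‖wΦ - wΨ‖ ≤ ε / μ :=
  minimizer_lipschitz_in_objective_general μ ε hμ W Φ' Ψ' hmono wΦ wΨ hwΦ hwΨ hoptΦ hoptΨ hclose
end

section
/- Let f : ℝ^d → ℝ be L-smooth and G-Lipschitz (‖∇f(w)‖ ≤ G for all w). Fix w ∈ ℝ^d with ‖w‖ ≤ W₀ and let m ∈ {0,1}^d be a random mask with i.i.d. Bernoulli(p) coordinates. Then ‖E[m ⊙ ∇f(m ⊙ w)] − ∇f(w)‖² ≤ (2G² + 2W₀²L²) · d(1 − p). -/
lemma boolMask_sub {d : ℕ} (b : Fin d → Bool) (x y : EuclideanSpace ℝ (Fin d)) :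
    boolMask b (x - y) = boolMask b x - boolMask b y := by
  ext j
  simp only [boolMask, PiLp.sub_apply]
  by_cases h : b j <;> simp [h]

lemma norm_boolMask_le {d : ℕ} (b : Fin d → Bool) (x : EuclideanSpace ℝ (Fin d)) :
    ‖boolMask b x‖ ≤ ‖x‖ := by
  rw [EuclideanSpace.norm_eq, EuclideanSpace.norm_eq]
  apply Real.sqrt_le_sqrt
  apply Finset.sum_le_sum
  intro i _
  simp only [boolMask, WithLp.ofLp_toLp]
  by_cases h : b i
  · rw [if_pos h]
  · rw [if_neg h, norm_zero]
    norm_num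
    positivity

lemma norm_boolMask_sub_le {d : ℕ} (b : Fin d → Bool) (x : EuclideanSpace ℝ (Fin d)) :
    ‖boolMask b x - x‖ ≤ ‖x‖ := by
  rw [EuclideanSpace.norm_eq, EuclideanSpace.norm_eq]
  apply Real.sqrt_le_sqrt
  apply Finset.sum_le_sum
  intro i _
  simp only [PiLp.sub_apply, boolMask, WithLp.ofLp_toLp]
  by_cases h : b i
  · simp [h]
    exact sq_nonneg _
  · simp [h]

lemma boolMask_all_true {d : ℕ} (b : Fin d → Bool) (hb : ∀ j, b j = true)
    (x : EuclideanSpace ℝ (Fin d)) : boolMask b x = x := by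
  ext j; simp [boolMask, hb j]

/-- For `f` `L`-smooth with `‖∇f‖ ≤ G`, `‖w‖ ≤ W₀`, and `m` a random mask with i.i.d.
Bernoulli(p) coordinates,
`‖E[m ⊙ ∇f(m ⊙ w)] − ∇f(w)‖² ≤ (2G² + 2W₀²L²)·d(1−p)`. -/
theorem expected_masked_gradient_bias {d : ℕ} (L G W₀ p : ℝ)
    (hp0 : 0 ≤ p) (hp1 : p ≤ 1)
    (f' : EuclideanSpace ℝ (Fin d) → EuclideanSpace ℝ (Fin d))
    (hLip : ∀ x y, ‖f' x - f' y‖ ≤ L * ‖x - y‖)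
    (hG : ∀ v, ‖f' v‖ ≤ G)
    (w : EuclideanSpace ℝ (Fin d)) (hw : ‖w‖ ≤ W₀) :
    ‖(∑ b : Fin d → Bool,
        (∏ j, if b j then p else 1 - p) • boolMask b (f' (boolMask b w))) - f' w‖ ^ 2 ≤
      (2 * G ^ 2 + 2 * W₀ ^ 2 * L ^ 2) * (d * (1 - p)) := by
  set C : ℝ := 2 * G ^ 2 + 2 * W₀ ^ 2 * L ^ 2 with hC
  have hG0 : 0 ≤ G := le_trans (norm_nonneg _) (hG 0)
  have hW0 : 0 ≤ W₀ := le_trans (norm_nonneg _) hw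
  have hC0 : 0 ≤ C := by positivity
  -- weights
  set μ : (Fin d → Bool) → ℝ := fun b => ∏ j, if b j then p else 1 - p with hμ
  have hμ0 : ∀ b, 0 ≤ μ b := by
    intro b
    apply Finset.prod_nonneg
    intro j _
    by_cases h : b j <;> simp [h, hp0, sub_nonneg.mpr hp1]
  have hμsum : ∑ b : Fin d → Bool, μ b = 1 := by
    have := Finset.prod_univ_sum (fun _ : Fin d => (Finset.univ : Finset Bool))
      (fun _ x => if x then p else (1 - p))
    rw [Fintype.piFinset_univ] at this
    rw [hμ, ← this]
    simp
  -- number of masked coordinates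
  set K : (Fin d → Bool) → ℝ := fun b => ∑ j, if b j then (0:ℝ) else 1 with hK
  have hK0 : ∀ b, 0 ≤ K b := by
    intro b
    apply Finset.sum_nonneg
    intro j _
    by_cases h : b j <;> simp [h]
  -- expectation of K
  have hKsum : ∑ b : Fin d → Bool, μ b * K b = d * (1 - p) := by
    have key : ∀ j0 : Fin d,
        (∑ b : Fin d → Bool, μ b * if b j0 then (0:ℝ) else 1) = 1 - p := by
      intro j0
      have h1 : ∀ b : Fin d → Bool, μ b * (if b j0 then (0:ℝ) else 1) =
          ∏ i, (if i = j0 then ((if b i then p else 1 - p) * if b i then (0:ℝ) else 1)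
            else (if b i then p else 1 - p)) := by
        intro b
        have hfac : ∀ i : Fin d, (if i = j0 then
            ((if b i then p else 1 - p) * if b i then (0:ℝ) else 1)
            else (if b i then p else 1 - p)) =
            (if b i then p else 1 - p) *
              (if i = j0 then (if b i then (0:ℝ) else 1) else 1) := by
          intro i; by_cases h : i = j0 <;> simp [h]
        rw [Finset.prod_congr rfl (fun i _ => hfac i), Finset.prod_mul_distrib,
          Finset.prod_ite_eq' Finset.univ j0 (fun i => if b i then (0:ℝ) else 1)]
        simp [hμ]
      simp only [h1]
      have h2 := Finset.prod_univ_sum (fun _ : Fin d => (Finset.univ : Finset Bool))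
        (fun i x => if i = j0 then ((if x then p else 1 - p) * if x then (0:ℝ) else 1)
          else (if x then p else 1 - p))
      rw [Fintype.piFinset_univ] at h2
      rw [← h2]
      have h3 : ∀ i : Fin d, (∑ x : Bool, if i = j0 then
          ((if x then p else 1 - p) * if x then (0:ℝ) else 1)
          else (if x then p else 1 - p)) = if i = j0 then 1 - p else 1 := by
        intro i
        by_cases h : i = j0 <;> simp [h] <;> ring
      rw [Finset.prod_congr rfl (fun i _ => h3 i),
        Finset.prod_ite_eq' Finset.univ j0 (fun _ => 1 - p)]
      simp
    calc ∑ b : Fin d → Bool, μ b * K b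
        = ∑ b : Fin d → Bool, ∑ j, μ b * if b j then (0:ℝ) else 1 := by
          apply Finset.sum_congr rfl; intro b _; rw [hK, Finset.mul_sum]
      _ = ∑ j : Fin d, ∑ b : Fin d → Bool, μ b * if b j then (0:ℝ) else 1 :=
          Finset.sum_comm
      _ = ∑ _j : Fin d, (1 - p) := Finset.sum_congr rfl (fun j _ => key j)
      _ = d * (1 - p) := by simp [mul_comm]; ring
  -- pointwise bound
  set v : (Fin d → Bool) → EuclideanSpace ℝ (Fin d) :=
    fun b => boolMask b (f' (boolMask b w)) - f' w with hv
  have hpoint : ∀ b, ‖v b‖ ^ 2 ≤ C * K b := by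
    intro b
    by_cases hb : ∀ j, b j = true
    · have : v b = 0 := by
        simp only [hv]
        simp [boolMask_all_true b hb]
      rw [this, norm_zero]
      simpa using mul_nonneg hC0 (hK0 b)
    · push_neg at hb
      obtain ⟨j0, hj0⟩ := hb
      have hj0' : b j0 = false := by
        cases h : b j0 with
        | false => rfl
        | true => exact absurd h hj0
      have hK1 : (1:ℝ) ≤ K b := by
        have := Finset.single_le_sum (f := fun j => if b j then (0:ℝ) else 1)
          (fun j _ => by by_cases h : b j <;> simp [h]) (Finset.mem_univ j0)
        simpa [hj0'] using this
      have hL0 : 0 ≤ L := by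
        have h1 := hLip (EuclideanSpace.single j0 1) 0
        have h2 : ‖(EuclideanSpace.single j0 (1:ℝ)) - 0‖ = 1 := by
          simp [EuclideanSpace.norm_single]
        rw [h2, mul_one] at h1
        exact le_trans (norm_nonneg _) h1
      -- split v b
      have hsplit : v b = boolMask b (f' (boolMask b w) - f' w) +
          (boolMask b (f' w) - f' w) := by
        simp only [hv, boolMask_sub]; abel
      have hA : ‖boolMask b (f' (boolMask b w) - f' w)‖ ≤ L * W₀ := by
        calc ‖boolMask b (f' (boolMask b w) - f' w)‖
            ≤ ‖f' (boolMask b w) - f' w‖ := norm_boolMask_le _ _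
          _ ≤ L * ‖boolMask b w - w‖ := hLip _ _
          _ ≤ L * W₀ := by
              apply mul_le_mul_of_nonneg_left _ hL0
              exact le_trans (norm_boolMask_sub_le _ _) hw
      have hB : ‖boolMask b (f' w) - f' w‖ ≤ G :=
        le_trans (norm_boolMask_sub_le _ _) (hG w)
      have hvb : ‖v b‖ ≤ L * W₀ + G := by
        rw [hsplit]
        exact le_trans (norm_add_le _ _) (add_le_add hA hB)
      have hsq : ‖v b‖ ^ 2 ≤ (L * W₀ + G) ^ 2 := by
        apply sq_le_sq' _ hvb
        linarith [norm_nonneg (v b)]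
      calc ‖v b‖ ^ 2 ≤ (L * W₀ + G) ^ 2 := hsq
        _ ≤ C := by rw [hC]; nlinarith [sq_nonneg (L * W₀ - G)]
        _ = C * 1 := (mul_one C).symm
        _ ≤ C * K b := by
            apply mul_le_mul_of_nonneg_left hK1 hC0
  -- rewrite LHS as a convex combination
  have hrw : (∑ b : Fin d → Bool, μ b • boolMask b (f' (boolMask b w))) - f' w
      = ∑ b : Fin d → Bool, μ b • v b := by
    have : f' w = ∑ b : Fin d → Bool, μ b • f' w := by
      rw [← Finset.sum_smul, hμsum, one_smul]
    calc (∑ b : Fin d → Bool, μ b • boolMask b (f' (boolMask b w))) - f' w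
        = ∑ b : Fin d → Bool, (μ b • boolMask b (f' (boolMask b w)) - μ b • f' w) := by
          rw [Finset.sum_sub_distrib, ← this]
      _ = ∑ b : Fin d → Bool, μ b • v b := by
          apply Finset.sum_congr rfl
          intro b _
          simp only [hv, smul_sub]
  rw [hrw]
  -- Jensen / Cauchy–Schwarz
  have h1 : ‖∑ b : Fin d → Bool, μ b • v b‖ ≤ ∑ b : Fin d → Bool, μ b * ‖v b‖ := by
    refine le_trans (norm_sum_le _ _) (Finset.sum_le_sum fun b _ => ?_)
    rw [norm_smul, Real.norm_eq_abs, abs_of_nonneg (hμ0 b)]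
  have h2 : (∑ b : Fin d → Bool, μ b * ‖v b‖) ^ 2 ≤
      ∑ b : Fin d → Bool, μ b * ‖v b‖ ^ 2 := by
    have hcs := Finset.sum_mul_sq_le_sq_mul_sq Finset.univ
      (fun b : Fin d → Bool => Real.sqrt (μ b))
      (fun b : Fin d → Bool => Real.sqrt (μ b) * ‖v b‖)
    have e1 : ∀ b : Fin d → Bool,
        Real.sqrt (μ b) * (Real.sqrt (μ b) * ‖v b‖) = μ b * ‖v b‖ := by
      intro b
      rw [← mul_assoc, Real.mul_self_sqrt (hμ0 b)]
    have e2 : ∀ b : Fin d → Bool, Real.sqrt (μ b) ^ 2 = μ b := fun b =>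
      Real.sq_sqrt (hμ0 b)
    have e3 : ∀ b : Fin d → Bool,
        (Real.sqrt (μ b) * ‖v b‖) ^ 2 = μ b * ‖v b‖ ^ 2 := by
      intro b
      rw [mul_pow, e2]
    simp only [e1, e2, e3] at hcs
    calc (∑ b : Fin d → Bool, μ b * ‖v b‖) ^ 2
        ≤ (∑ b : Fin d → Bool, μ b) * ∑ b : Fin d → Bool, μ b * ‖v b‖ ^ 2 := hcs
      _ = ∑ b : Fin d → Bool, μ b * ‖v b‖ ^ 2 := by rw [hμsum, one_mul]
  have h3 : ‖∑ b : Fin d → Bool, μ b • v b‖ ^ 2 ≤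
      ∑ b : Fin d → Bool, μ b * ‖v b‖ ^ 2 := by
    refine le_trans ?_ h2
    apply pow_le_pow_left₀ (norm_nonneg _) h1
  refine le_trans h3 ?_
  calc ∑ b : Fin d → Bool, μ b * ‖v b‖ ^ 2
      ≤ ∑ b : Fin d → Bool, μ b * (C * K b) := by
        apply Finset.sum_le_sum
        intro b _
        exact mul_le_mul_of_nonneg_left (hpoint b) (hμ0 b)
    _ = C * ∑ b : Fin d → Bool, μ b * K b := by
        rw [Finset.mul_sum]
        apply Finset.sum_congr rfl
        intro b _
        ring
    _ = C * (d * (1 - p)) := by rw [hKsum]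
end
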